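/- arXiv:2408.03527 — 2 statements merged into one kernel-verified Lean document; each statement's English description precedes it below -/
import Mathlib

section
/- General Farkas lemma for equality and (strict) inequality constraints: let A_1, …, A_5 be real matrices with n columns and m_1, …, m_5 rows respectively, and let a_i ∈ ℝ^{m_i} for i = 1,…,5. Then exactly one of the following holds: (1) there exists x ∈ ℝ^n with A_1 x = a_1, A_2 x ≤ a_2, A_3 x < a_3, A_4 x ≥ a_4 and A_5 x > a_5 (all inequalities componentwise); (2) there exist row vectors y_i ∈ ℝ^{m_i} (i = 1,…,5) with y_2 ≥ 0, y_3 ≥ 0, y_4 ≤ 0, y_5 ≤ 0, Σ_{i=1}^5 y_i A_i = 0, and either Σ_{i=1}^5 ⟨y_i, a_i⟩ < 0, or Σ_{i=1}^5 ⟨y_i, a_i⟩ = 0 together with (y_3 ≠ 0 or y_5 ≠ 0). -/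
open RealInnerProductSpace

noncomputable section

/-- `ℝ^n` with the Euclidean inner product. -/
abbrev Euc (n : ℕ) := EuclideanSpace ℝ (Fin n)

/-- Standard scalar product on `ℝ^m` (as tuples). -/
def dotm {m : ℕ} (c a : Fin m → ℝ) : ℝ := ∑ i, c i * a i

/-- `C` is a circuit: the family `{u i : i ∈ C}` is linearly dependent but every proper
subfamily is linearly independent. -/
def IsCircuit {n m : ℕ} (u : Fin m → Euc n) (C : Set (Fin m)) : Prop :=
  ¬ LinearIndependent ℝ (fun i : C => u i) ∧
    ∀ D : Set (Fin m), D ⊂ C → LinearIndependent ℝ (fun i : D => u i)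

/-- `c` is a circuit vector: `∑ i, c i • u i = 0` and the support of `c` is a circuit. -/
def IsCircuitVector {n m : ℕ} (u : Fin m → Euc n) (c : Fin m → ℝ) : Prop :=
  (∑ i, c i • u i) = 0 ∧ IsCircuit u {i | c i ≠ 0}

/-- `a` and `b` lie in the same open face of the derived arrangement `δA_o`:
for every circuit vector `c`, `⟨c,a⟩` and `⟨c,b⟩` have the same sign. -/
def SameOpenFace {n m : ℕ} (u : Fin m → Euc n) (a b : Fin m → ℝ) : Prop :=
  ∀ c : Fin m → ℝ, IsCircuitVector u c →
    SignType.sign (dotm c a) = SignType.sign (dotm c b)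

/-- `I, J, K` is a partition of `{1,…,m}` into pairwise disjoint (possibly empty) sets. -/
def IsTripartition {m : ℕ} (I J K : Set (Fin m)) : Prop :=
  I ∪ J ∪ K = Set.univ ∧ Disjoint I J ∧ Disjoint I K ∧ Disjoint J K

/-- The convex polyhedron `P(a,I,J,K)`. -/
def poly {n m : ℕ} (u : Fin m → Euc n) (a : Fin m → ℝ) (I J K : Set (Fin m)) :
    Set (Euc n) :=
  {x | (∀ i ∈ I, ⟪u i, x⟫ = a i) ∧ (∀ j ∈ J, ⟪u j, x⟫ ≤ a j) ∧ (∀ k ∈ K, a k ≤ ⟪u k, x⟫)}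

/-- The normal cone of `P` at `x`. -/
def normalCone {n : ℕ} (P : Set (Euc n)) (x : Euc n) : Set (Euc n) :=
  {v | ∀ y ∈ P, ⟪v, y⟫ ≤ ⟪v, x⟫}

/-- The normal fan of `P`: the family of normal cones at points of `P`. -/
def normalFan {n : ℕ} (P : Set (Euc n)) : Set (Set (Euc n)) :=
  {N | ∃ x ∈ P, N = normalCone P x}

/-- A face of a convex polyhedron: the empty set or an exposed face. -/
def IsFace {n : ℕ} (P F : Set (Euc n)) : Prop :=
  F = ∅ ∨ ∃ v : Euc n, F = {x ∈ P | ∀ y ∈ P, ⟪v, y⟫ ≤ ⟪v, x⟫}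

/-- The set of sign vectors of the parallel translation `A_a`. -/
def signSet {n m : ℕ} (u : Fin m → Euc n) (a : Fin m → ℝ) : Set (Fin m → SignType) :=
  {s | ∃ x : Euc n, ∀ i, s i = SignType.sign (⟪u i, x⟫ - a i)}

def FRel (s : Bool) (x y : ℝ) : Prop := if s then x < y else x ≤ y

lemma FRel_le {s : Bool} {x y : ℝ} (h : FRel s x y) : x ≤ y := by
  cases s <;> simp [FRel] at h
  · exact h
  · exact h.le

lemma FRel_of_lt {s : Bool} {x y : ℝ} (h : x < y) : FRel s x y := by
  cases s <;> simp [FRel]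
  · exact h.le
  · exact h

lemma FRel_false {x y : ℝ} (h : x ≤ y) : FRel false x y := by simpa [FRel] using h

lemma FRel_true {x y : ℝ} (h : x < y) : FRel true x y := by simpa [FRel] using h

lemma exists_sandwich {α β : Type} [Fintype α] [Fintype β]
    (U : α → ℝ) (L : β → ℝ) (sU : α → Bool) (sL : β → Bool)
    (hle : ∀ a b, L b ≤ U a) (hlt : ∀ a b, (sU a = true ∨ sL b = true) → L b < U a) :
    ∃ t : ℝ, (∀ a, FRel (sU a) t (U a)) ∧ (∀ b, FRel (sL b) (L b) t) := by
  rcases isEmpty_or_nonempty α with hα | hα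
  · rcases isEmpty_or_nonempty β with hβ | hβ
    · exact ⟨0, fun a => (hα.false a).elim, fun b => (hβ.false b).elim⟩
    · refine ⟨(Finset.univ.sup' Finset.univ_nonempty L) + 1, fun a => (hα.false a).elim,
        fun b => FRel_of_lt ?_⟩
      have := Finset.le_sup' L (Finset.mem_univ b)
      linarith
  · rcases isEmpty_or_nonempty β with hβ | hβ
    · refine ⟨(Finset.univ.inf' Finset.univ_nonempty U) - 1, fun a => FRel_of_lt ?_,
        fun b => (hβ.false b).elim⟩
      have := Finset.inf'_le U (Finset.mem_univ a)
      linarith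
    · set M := Finset.univ.sup' Finset.univ_nonempty L with hM
      set m := Finset.univ.inf' Finset.univ_nonempty U with hm
      have hMm : M ≤ m := by
        apply Finset.sup'_le
        intro b _
        apply Finset.le_inf'
        intro a _
        exact hle a b
      rcases lt_or_eq_of_le hMm with h | h
      · refine ⟨(M + m) / 2, fun a => FRel_of_lt ?_, fun b => FRel_of_lt ?_⟩
        · have := Finset.inf'_le U (Finset.mem_univ a); linarith
        · have := Finset.le_sup' L (Finset.mem_univ b); linarith
      · refine ⟨M, fun a => ?_, fun b => ?_⟩
        · rcases Bool.eq_false_or_eq_true (sU a) with hs | hs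
          · rw [hs]
            obtain ⟨b0, _, hb0⟩ := Finset.exists_mem_eq_sup' Finset.univ_nonempty L
            refine FRel_true ?_
            have := hlt a b0 (Or.inl hs)
            rw [← hM] at hb0
            rw [hb0]
            exact this
          · rw [hs]
            refine FRel_false ?_
            rw [h]
            exact Finset.inf'_le U (Finset.mem_univ a)
        · rcases Bool.eq_false_or_eq_true (sL b) with hs | hs
          · rw [hs]
            obtain ⟨a0, _, ha0⟩ := Finset.exists_mem_eq_inf' Finset.univ_nonempty U
            refine FRel_true ?_
            have := hlt a0 b (Or.inr hs)
            rw [← hm] at ha0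
            rw [h, ha0]
            exact this
          · rw [hs]
            exact FRel_false (Finset.le_sup' L (Finset.mem_univ b))

def dotm' {m : ℕ} (c a : Fin m → ℝ) : ℝ := ∑ i, c i * a i

lemma FRel_lt {x y : ℝ} (h : FRel true x y) : x < y := by simpa [FRel] using h

lemma dotm'_comb {n : ℕ} (A B : ℝ) (u v x : Fin n → ℝ) :
    dotm' (fun j => A * u j + B * v j) x = A * dotm' u x + B * dotm' v x := by
  simp [dotm', add_mul, mul_assoc, Finset.sum_add_distrib, Finset.mul_sum]

lemma dotm'_snoc {n : ℕ} (v : Fin (n + 1) → ℝ) (x : Fin n → ℝ) (t : ℝ) :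
    dotm' v (Fin.snoc x t) = dotm' (fun j => v (Fin.castSucc j)) x + v (Fin.last n) * t := by
  simp [dotm', Fin.sum_univ_castSucc]

lemma sum_ite_mul' {ι κ : Type} [Fintype ι] [Fintype κ] [DecidableEq ι] (f : κ → ℝ) (π : κ → ι)
    (g : ι → ℝ) :
    ∑ i, (∑ k, if π k = i then f k else 0) * g i = ∑ k, f k * g (π k) := by
  simp only [Finset.sum_mul, ite_mul, zero_mul]
  rw [Finset.sum_comm]
  simp [Finset.sum_ite_eq]

lemma motzkin (n : ℕ) : ∀ (ι : Type) [Fintype ι] (v : ι → Fin n → ℝ) (b : ι → ℝ) (s : ι → Bool),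
    (∃ x : Fin n → ℝ, ∀ i, FRel (s i) (dotm' (v i) x) (b i)) ∨
    (∃ y : ι → ℝ, (∀ i, 0 ≤ y i) ∧ (∀ j, ∑ i, y i * v i j = 0) ∧
      ((∑ i, y i * b i) < 0 ∨ ((∑ i, y i * b i) = 0 ∧ ∃ i, s i = true ∧ 0 < y i))) := by
  induction n with
  | zero =>
    intro ι _ v b s
    by_cases h : ∀ i, FRel (s i) 0 (b i)
    · exact Or.inl ⟨fun _ => 0, fun i => by simpa [dotm'] using h i⟩
    · push_neg at h
      obtain ⟨i, hi⟩ := h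
      right
      classical
      refine ⟨fun j => if j = i then 1 else 0, fun j => by positivity, fun j => j.elim0, ?_⟩
      have hb : (∑ j, (if j = i then (1:ℝ) else 0) * b j) = b i := by simp
      rw [hb]
      cases hsi : s i with
      | false =>
        rw [hsi] at hi
        simp only [FRel, if_neg Bool.false_ne_true] at hi
        left; linarith [lt_of_not_ge hi]
      | true =>
        rw [hsi] at hi
        simp only [FRel, if_pos rfl] at hi
        rcases lt_or_eq_of_le (le_of_not_gt hi) with h' | h'
        · exact Or.inl h'
        · exact Or.inr ⟨h', i, hsi, by simp⟩
  | succ n IH =>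
    intro ι _ v b s
    classical
    set c : ι → ℝ := fun i => v i (Fin.last n) with hc
    set w : ι → Fin n → ℝ := fun i j => v i (Fin.castSucc j) with hw
    rcases IH ({i : ι // c i = 0} ⊕ {i : ι // 0 < c i} × {i : ι // c i < 0})
        (Sum.elim (fun q => w q.1)
          (fun p => fun j => (-(c p.2.1)) * w p.1.1 j + (c p.1.1) * w p.2.1 j))
        (Sum.elim (fun q => b q.1)
          (fun p => (-(c p.2.1)) * b p.1.1 + (c p.1.1) * b p.2.1))
        (Sum.elim (fun q => s q.1) (fun p => s p.1.1 || s p.2.1)) with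
      ⟨x', hx'⟩ | ⟨Y, hY0, hYV, hYB⟩
    · -- feasible: construct x = snoc x' t
      left
      have hcomb : ∀ (a : {i : ι // 0 < c i}) (e : {i : ι // c i < 0}),
          FRel (s a.1 || s e.1)
            ((-(c e.1)) * dotm' (w a.1) x' + (c a.1) * dotm' (w e.1) x')
            ((-(c e.1)) * b a.1 + (c a.1) * b e.1) := by
        intro a e
        have h := hx' (Sum.inr (a, e))
        simpa only [Sum.elim_inr, dotm'_comb] using h
      have hle : ∀ (a : {i : ι // 0 < c i}) (e : {i : ι // c i < 0}),
          (fun e : {i : ι // c i < 0} => (dotm' (w e.1) x' - b e.1) / (-(c e.1))) e ≤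
          (fun a : {i : ι // 0 < c i} => (b a.1 - dotm' (w a.1) x') / (c a.1)) a := by
        intro a e
        have h := FRel_le (hcomb a e)
        rw [div_le_div_iff₀ (by linarith [e.2]) a.2]
        nlinarith [h]
      have hlt : ∀ (a : {i : ι // 0 < c i}) (e : {i : ι // c i < 0}),
          ((fun a : {i : ι // 0 < c i} => s a.1) a = true ∨
           (fun e : {i : ι // c i < 0} => s e.1) e = true) →
          (fun e : {i : ι // c i < 0} => (dotm' (w e.1) x' - b e.1) / (-(c e.1))) e <
          (fun a : {i : ι // 0 < c i} => (b a.1 - dotm' (w a.1) x') / (c a.1)) a := by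
        intro a e hor
        have hb : (s a.1 || s e.1) = true := by
          rcases hor with h | h <;> simp [h]
        have h := FRel_lt (hb ▸ hcomb a e)
        rw [div_lt_div_iff₀ (by linarith [e.2]) a.2]
        nlinarith [h]
      obtain ⟨t, htU, htL⟩ := exists_sandwich
        (fun a : {i : ι // 0 < c i} => (b a.1 - dotm' (w a.1) x') / (c a.1))
        (fun e : {i : ι // c i < 0} => (dotm' (w e.1) x' - b e.1) / (-(c e.1)))
        (fun a => s a.1) (fun e => s e.1) hle hlt
      refine ⟨Fin.snoc x' t, fun i => ?_⟩
      rw [dotm'_snoc]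
      rcases lt_trichotomy (c i) 0 with hci | hci | hci
      · have hL := htL ⟨i, hci⟩
        cases hsi : s i with
        | false =>
          rw [hsi] at hL
          have h' := FRel_le hL
          rw [div_le_iff₀ (by linarith : (0:ℝ) < -(c i))] at h'
          refine FRel_false ?_
          have : v i (Fin.last n) = c i := by rw [hc]
          rw [this]
          nlinarith [h']
        | true =>
          rw [hsi] at hL
          have h' := FRel_lt hL
          rw [div_lt_iff₀ (by linarith : (0:ℝ) < -(c i))] at h'
          refine FRel_true ?_
          have : v i (Fin.last n) = c i := by rw [hc]
          rw [this]
          nlinarith [h']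
      · have h := hx' (Sum.inl ⟨i, hci⟩)
        simp only [Sum.elim_inl] at h
        have : v i (Fin.last n) = c i := by rw [hc]
        rw [this, hci]
        simpa using h
      · have hU := htU ⟨i, hci⟩
        cases hsi : s i with
        | false =>
          rw [hsi] at hU
          have h' := FRel_le hU
          rw [le_div_iff₀ hci] at h'
          refine FRel_false ?_
          have : v i (Fin.last n) = c i := by rw [hc]
          rw [this]
          nlinarith [h']
        | true =>
          rw [hsi] at hU
          have h' := FRel_lt hU
          rw [lt_div_iff₀ hci] at h'
          refine FRel_true ?_
          have : v i (Fin.last n) = c i := by rw [hc]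
          rw [this]
          nlinarith [h']
    · -- infeasible: construct certificate y
      right
      set y : ι → ℝ := fun i =>
        (∑ q : {i : ι // c i = 0}, if q.1 = i then Y (.inl q) else 0)
        + (∑ p : {i : ι // 0 < c i} × {i : ι // c i < 0},
            if p.1.1 = i then Y (.inr p) * (-(c p.2.1)) else 0)
        + (∑ p : {i : ι // 0 < c i} × {i : ι // c i < 0},
            if p.2.1 = i then Y (.inr p) * (c p.1.1) else 0) with hy
      have key : ∀ g : ι → ℝ, ∑ i, y i * g i =
          (∑ q : {i : ι // c i = 0}, Y (.inl q) * g q.1)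
          + (∑ p : {i : ι // 0 < c i} × {i : ι // c i < 0},
              (Y (.inr p) * (-(c p.2.1))) * g p.1.1)
          + (∑ p : {i : ι // 0 < c i} × {i : ι // c i < 0},
              (Y (.inr p) * (c p.1.1)) * g p.2.1) := by
        intro g
        simp only [hy, add_mul, Finset.sum_add_distrib]
        rw [sum_ite_mul', sum_ite_mul', sum_ite_mul']
      have hnn1 : ∀ i, (0:ℝ) ≤ ∑ q : {i : ι // c i = 0}, if q.1 = i then Y (.inl q) else 0 := by
        intro i
        refine Finset.sum_nonneg fun k _ => ?_
        split_ifs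
        · exact hY0 _
        · exact le_refl 0
      have hnn2 : ∀ i, (0:ℝ) ≤ ∑ p : {i : ι // 0 < c i} × {i : ι // c i < 0},
          if p.1.1 = i then Y (.inr p) * (-(c p.2.1)) else 0 := by
        intro i
        refine Finset.sum_nonneg fun k _ => ?_
        split_ifs
        · exact mul_nonneg (hY0 _) (by linarith [k.2.2])
        · exact le_refl 0
      have hnn3 : ∀ i, (0:ℝ) ≤ ∑ p : {i : ι // 0 < c i} × {i : ι // c i < 0},
          if p.2.1 = i then Y (.inr p) * (c p.1.1) else 0 := by
        intro i
        refine Finset.sum_nonneg fun k _ => ?_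
        split_ifs
        · exact mul_nonneg (hY0 _) (le_of_lt k.1.2)
        · exact le_refl 0
      have hy0 : ∀ i, 0 ≤ y i := by
        intro i
        rw [hy]
        exact add_nonneg (add_nonneg (hnn1 i) (hnn2 i)) (hnn3 i)
      have hvj : ∀ j : Fin (n+1), ∑ i, y i * v i j = 0 := by
        intro j
        induction j using Fin.lastCases with
        | last =>
          have e1 : (∑ i, y i * v i (Fin.last n)) = ∑ i, y i * c i :=
            Finset.sum_congr rfl fun i _ => by simp only [hc]
          have k1 : (∑ i, y i * c i) =
              (∑ q : {i : ι // c i = 0}, Y (.inl q) * c q.1)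
              + (∑ p : {i : ι // 0 < c i} × {i : ι // c i < 0},
                  (Y (.inr p) * (-(c p.2.1))) * c p.1.1)
              + (∑ p : {i : ι // 0 < c i} × {i : ι // c i < 0},
                  (Y (.inr p) * (c p.1.1)) * c p.2.1) := key c
          have hA : (∑ q : {i : ι // c i = 0}, Y (.inl q) * c q.1) = 0 :=
            Finset.sum_eq_zero fun q _ => by rw [q.2, mul_zero]
          have hBC : (∑ p : {i : ι // 0 < c i} × {i : ι // c i < 0},
                  (Y (.inr p) * (-(c p.2.1))) * c p.1.1)
              + (∑ p : {i : ι // 0 < c i} × {i : ι // c i < 0},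
                  (Y (.inr p) * (c p.1.1)) * c p.2.1) = 0 := by
            rw [← Finset.sum_add_distrib]
            exact Finset.sum_eq_zero fun p _ => by ring
          rw [e1, k1]
          linarith
        | cast j' =>
          have e1 : (∑ i, y i * v i (Fin.castSucc j')) = ∑ i, y i * w i j' :=
            Finset.sum_congr rfl fun i _ => by simp only [hw]
          have k2 : (∑ i, y i * w i j') =
              (∑ q : {i : ι // c i = 0}, Y (.inl q) * w q.1 j')
              + (∑ p : {i : ι // 0 < c i} × {i : ι // c i < 0},
                  (Y (.inr p) * (-(c p.2.1))) * w p.1.1 j')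
              + (∑ p : {i : ι // 0 < c i} × {i : ι // c i < 0},
                  (Y (.inr p) * (c p.1.1)) * w p.2.1 j') := key (fun i => w i j')
          have h := hYV j'
          rw [Fintype.sum_sum_type] at h
          simp only [Sum.elim_inl, Sum.elim_inr] at h
          have hsplit : (∑ p : {i : ι // 0 < c i} × {i : ι // c i < 0},
                  (Y (.inr p) * (-(c p.2.1))) * w p.1.1 j')
              + (∑ p : {i : ι // 0 < c i} × {i : ι // c i < 0},
                  (Y (.inr p) * (c p.1.1)) * w p.2.1 j')
              = ∑ p : {i : ι // 0 < c i} × {i : ι // c i < 0},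
                  Y (.inr p) * ((-(c p.2.1)) * w p.1.1 j' + (c p.1.1) * w p.2.1 j') := by
            rw [← Finset.sum_add_distrib]
            exact Finset.sum_congr rfl fun p _ => by ring
          rw [e1, k2]
          rw [add_assoc, hsplit]
          exact h
      have k3 : (∑ i, y i * b i) =
          (∑ q : {i : ι // c i = 0}, Y (.inl q) * b q.1)
          + (∑ p : {i : ι // 0 < c i} × {i : ι // c i < 0},
              (Y (.inr p) * (-(c p.2.1))) * b p.1.1)
          + (∑ p : {i : ι // 0 < c i} × {i : ι // c i < 0},
              (Y (.inr p) * (c p.1.1)) * b p.2.1) := key b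
      have hYBsum := hYB
      rw [Fintype.sum_sum_type] at hYBsum
      simp only [Sum.elim_inl, Sum.elim_inr] at hYBsum
      have hsplitb : (∑ p : {i : ι // 0 < c i} × {i : ι // c i < 0},
              (Y (.inr p) * (-(c p.2.1))) * b p.1.1)
          + (∑ p : {i : ι // 0 < c i} × {i : ι // c i < 0},
              (Y (.inr p) * (c p.1.1)) * b p.2.1)
          = ∑ p : {i : ι // 0 < c i} × {i : ι // c i < 0},
              Y (.inr p) * (-(c p.2.1) * b p.1.1 + (c p.1.1) * b p.2.1) := by
        rw [← Finset.sum_add_distrib]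
        exact Finset.sum_congr rfl fun p _ => by ring
      have hEq : (∑ i, y i * b i) =
          (∑ q : {i : ι // c i = 0}, Y (.inl q) * b q.1)
          + ∑ p : {i : ι // 0 < c i} × {i : ι // c i < 0},
              Y (.inr p) * (-(c p.2.1) * b p.1.1 + (c p.1.1) * b p.2.1) := by
        rw [k3, add_assoc, hsplitb]
      refine ⟨y, hy0, hvj, ?_⟩
      rcases hYBsum with h | ⟨h0, k, hSk, hYk⟩
      · left
        rw [hEq]
        exact h
      · right
        constructor
        · rw [hEq]
          exact h0
        · rcases k with q | p
          · simp only [Sum.elim_inl] at hSk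
            refine ⟨q.1, hSk, ?_⟩
            have h1 : Y (.inl q) ≤ ∑ q' : {i : ι // c i = 0},
                if q'.1 = q.1 then Y (.inl q') else 0 := by
              have := Finset.single_le_sum
                (f := fun q' : {i : ι // c i = 0} => if q'.1 = q.1 then Y (.inl q') else 0)
                (fun q' _ => by
                  split_ifs
                  · exact hY0 _
                  · exact le_refl 0)
                (Finset.mem_univ q)
              simpa using this
            rw [hy]
            simp only
            have := hnn2 q.1
            have := hnn3 q.1
            linarith
          · simp only [Sum.elim_inr, Bool.or_eq_true] at hSk
            rcases hSk with hs1 | hs2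
            · refine ⟨p.1.1, hs1, ?_⟩
              have h1 : Y (.inr p) * (-(c p.2.1)) ≤
                  ∑ p' : {i : ι // 0 < c i} × {i : ι // c i < 0},
                    if p'.1.1 = p.1.1 then Y (.inr p') * (-(c p'.2.1)) else 0 := by
                have := Finset.single_le_sum
                  (f := fun p' : {i : ι // 0 < c i} × {i : ι // c i < 0} =>
                    if p'.1.1 = p.1.1 then Y (.inr p') * (-(c p'.2.1)) else 0)
                  (fun p' _ => by
                    split_ifs
                    · exact mul_nonneg (hY0 _) (by linarith [p'.2.2])
                    · exact le_refl 0)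
                  (Finset.mem_univ p)
                simpa using this
              have hpos : 0 < Y (.inr p) * (-(c p.2.1)) :=
                mul_pos hYk (by linarith [p.2.2])
              rw [hy]
              simp only
              have := hnn1 p.1.1
              have := hnn3 p.1.1
              linarith
            · refine ⟨p.2.1, hs2, ?_⟩
              have h1 : Y (.inr p) * (c p.1.1) ≤
                  ∑ p' : {i : ι // 0 < c i} × {i : ι // c i < 0},
                    if p'.2.1 = p.2.1 then Y (.inr p') * (c p'.1.1) else 0 := by
                have := Finset.single_le_sum
                  (f := fun p' : {i : ι // 0 < c i} × {i : ι // c i < 0} =>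
                    if p'.2.1 = p.2.1 then Y (.inr p') * (c p'.1.1) else 0)
                  (fun p' _ => by
                    split_ifs
                    · exact mul_nonneg (hY0 _) (le_of_lt p'.1.2)
                    · exact le_refl 0)
                  (Finset.mem_univ p)
                simpa using this
              have hpos : 0 < Y (.inr p) * (c p.1.1) := mul_pos hYk p.1.2
              rw [hy]
              simp only
              have := hnn1 p.2.1
              have := hnn2 p.2.1
              linarith

lemma dotm'_neg {n : ℕ} (u x : Fin n → ℝ) : dotm' (fun j => -u j) x = -(dotm' u x) := by
  simp [dotm', Finset.sum_neg_distrib]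

lemma dotm'_mulVec {m n : ℕ} (A : Matrix (Fin m) (Fin n) ℝ) (x : Fin n → ℝ) (i : Fin m) :
    dotm' (A i) x = A.mulVec x i := by
  simp [dotm', Matrix.mulVec, dotProduct]

lemma farkas_not_both {n m1 m2 m3 m4 m5 : ℕ}
    (A1 : Matrix (Fin m1) (Fin n) ℝ) (A2 : Matrix (Fin m2) (Fin n) ℝ)
    (A3 : Matrix (Fin m3) (Fin n) ℝ) (A4 : Matrix (Fin m4) (Fin n) ℝ)
    (A5 : Matrix (Fin m5) (Fin n) ℝ)
    (a1 : Fin m1 → ℝ) (a2 : Fin m2 → ℝ) (a3 : Fin m3 → ℝ) (a4 : Fin m4 → ℝ) (a5 : Fin m5 → ℝ)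
    (x : Fin n → ℝ)
    (hx1 : A1.mulVec x = a1) (hx2 : A2.mulVec x ≤ a2) (hx3 : ∀ i, A3.mulVec x i < a3 i)
    (hx4 : a4 ≤ A4.mulVec x) (hx5 : ∀ i, a5 i < A5.mulVec x i)
    (y1 : Fin m1 → ℝ) (y2 : Fin m2 → ℝ) (y3 : Fin m3 → ℝ) (y4 : Fin m4 → ℝ) (y5 : Fin m5 → ℝ)
    (h2 : 0 ≤ y2) (h3 : 0 ≤ y3) (h4 : y4 ≤ 0) (h5 : y5 ≤ 0)
    (hsum : Matrix.vecMul y1 A1 + Matrix.vecMul y2 A2 + Matrix.vecMul y3 A3 +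
      Matrix.vecMul y4 A4 + Matrix.vecMul y5 A5 = 0)
    (hdot : (∑ j, y1 j * a1 j) + (∑ j, y2 j * a2 j) + (∑ j, y3 j * a3 j) +
        (∑ j, y4 j * a4 j) + (∑ j, y5 j * a5 j) < 0 ∨
      ((∑ j, y1 j * a1 j) + (∑ j, y2 j * a2 j) + (∑ j, y3 j * a3 j) +
          (∑ j, y4 j * a4 j) + (∑ j, y5 j * a5 j) = 0 ∧ (y3 ≠ 0 ∨ y5 ≠ 0))) : False := by
  have hzero : ∑ k, (Matrix.vecMul y1 A1 + Matrix.vecMul y2 A2 + Matrix.vecMul y3 A3 +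
      Matrix.vecMul y4 A4 + Matrix.vecMul y5 A5) k * x k = 0 := by
    rw [hsum]; simp
  have e1 : ∑ j, y1 j * A1.mulVec x j = ∑ k, Matrix.vecMul y1 A1 k * x k := by
    have := Matrix.dotProduct_mulVec y1 A1 x
    simpa [dotProduct] using this
  have e2 : ∑ j, y2 j * A2.mulVec x j = ∑ k, Matrix.vecMul y2 A2 k * x k := by
    have := Matrix.dotProduct_mulVec y2 A2 x
    simpa [dotProduct] using this
  have e3 : ∑ j, y3 j * A3.mulVec x j = ∑ k, Matrix.vecMul y3 A3 k * x k := by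
    have := Matrix.dotProduct_mulVec y3 A3 x
    simpa [dotProduct] using this
  have e4 : ∑ j, y4 j * A4.mulVec x j = ∑ k, Matrix.vecMul y4 A4 k * x k := by
    have := Matrix.dotProduct_mulVec y4 A4 x
    simpa [dotProduct] using this
  have e5 : ∑ j, y5 j * A5.mulVec x j = ∑ k, Matrix.vecMul y5 A5 k * x k := by
    have := Matrix.dotProduct_mulVec y5 A5 x
    simpa [dotProduct] using this
  have hexp : (∑ j, y1 j * A1.mulVec x j) + (∑ j, y2 j * A2.mulVec x j) +
      (∑ j, y3 j * A3.mulVec x j) + (∑ j, y4 j * A4.mulVec x j) +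
      (∑ j, y5 j * A5.mulVec x j) = 0 := by
    rw [e1, e2, e3, e4, e5, ← hzero]
    simp [Pi.add_apply, add_mul, Finset.sum_add_distrib]
  have s1 : ∑ j, y1 j * (A1.mulVec x j - a1 j) = ∑ j, y1 j * A1.mulVec x j - ∑ j, y1 j * a1 j := by
    simp [mul_sub, Finset.sum_sub_distrib]
  have s2 : ∑ j, y2 j * (A2.mulVec x j - a2 j) = ∑ j, y2 j * A2.mulVec x j - ∑ j, y2 j * a2 j := by
    simp [mul_sub, Finset.sum_sub_distrib]
  have s3 : ∑ j, y3 j * (A3.mulVec x j - a3 j) = ∑ j, y3 j * A3.mulVec x j - ∑ j, y3 j * a3 j := by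
    simp [mul_sub, Finset.sum_sub_distrib]
  have s4 : ∑ j, y4 j * (A4.mulVec x j - a4 j) = ∑ j, y4 j * A4.mulVec x j - ∑ j, y4 j * a4 j := by
    simp [mul_sub, Finset.sum_sub_distrib]
  have s5 : ∑ j, y5 j * (A5.mulVec x j - a5 j) = ∑ j, y5 j * A5.mulVec x j - ∑ j, y5 j * a5 j := by
    simp [mul_sub, Finset.sum_sub_distrib]
  have t1 : ∑ j, y1 j * (A1.mulVec x j - a1 j) = 0 :=
    Finset.sum_eq_zero fun j _ => by rw [congrFun hx1 j]; ring
  have t2 : ∑ j, y2 j * (A2.mulVec x j - a2 j) ≤ 0 :=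
    Finset.sum_nonpos fun j _ =>
      mul_nonpos_iff.mpr (Or.inl ⟨h2 j, by linarith [hx2 j]⟩)
  have t3 : ∑ j, y3 j * (A3.mulVec x j - a3 j) ≤ 0 :=
    Finset.sum_nonpos fun j _ =>
      mul_nonpos_iff.mpr (Or.inl ⟨h3 j, by linarith [hx3 j]⟩)
  have t4 : ∑ j, y4 j * (A4.mulVec x j - a4 j) ≤ 0 :=
    Finset.sum_nonpos fun j _ =>
      mul_nonpos_iff.mpr (Or.inr ⟨h4 j, by linarith [hx4 j]⟩)
  have t5 : ∑ j, y5 j * (A5.mulVec x j - a5 j) ≤ 0 :=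
    Finset.sum_nonpos fun j _ =>
      mul_nonpos_iff.mpr (Or.inr ⟨h5 j, by linarith [hx5 j]⟩)
  rcases hdot with hlt | ⟨heq, hne⟩
  · linarith
  · rcases hne with hne3 | hne5
    · obtain ⟨j0, hj0⟩ := Function.ne_iff.mp hne3
      have hj0' : 0 < y3 j0 := lt_of_le_of_ne (h3 j0) (Ne.symm (by simpa using hj0))
      have t3' : ∑ j, y3 j * (A3.mulVec x j - a3 j) < 0 := by
        have := Finset.sum_lt_sum (f := fun j => y3 j * (A3.mulVec x j - a3 j))
          (g := fun _ => (0:ℝ))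
          (fun j _ => mul_nonpos_iff.mpr (Or.inl ⟨h3 j, by linarith [hx3 j]⟩))
          ⟨j0, Finset.mem_univ j0, mul_neg_of_pos_of_neg hj0' (by linarith [hx3 j0])⟩
        simpa using this
      linarith
    · obtain ⟨j0, hj0⟩ := Function.ne_iff.mp hne5
      have hj0' : y5 j0 < 0 := lt_of_le_of_ne (h5 j0) (by simpa using hj0)
      have t5' : ∑ j, y5 j * (A5.mulVec x j - a5 j) < 0 := by
        have := Finset.sum_lt_sum (f := fun j => y5 j * (A5.mulVec x j - a5 j))
          (g := fun _ => (0:ℝ))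
          (fun j _ => mul_nonpos_iff.mpr (Or.inr ⟨h5 j, by linarith [hx5 j]⟩))
          ⟨j0, Finset.mem_univ j0, mul_neg_of_neg_of_pos hj0' (by linarith [hx5 j0])⟩
        simpa using this
      linarith

theorem general_farkas {n m1 m2 m3 m4 m5 : ℕ}
    (A1 : Matrix (Fin m1) (Fin n) ℝ) (A2 : Matrix (Fin m2) (Fin n) ℝ)
    (A3 : Matrix (Fin m3) (Fin n) ℝ) (A4 : Matrix (Fin m4) (Fin n) ℝ)
    (A5 : Matrix (Fin m5) (Fin n) ℝ)
    (a1 : Fin m1 → ℝ) (a2 : Fin m2 → ℝ) (a3 : Fin m3 → ℝ) (a4 : Fin m4 → ℝ)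
    (a5 : Fin m5 → ℝ) :
    Xor'
      (∃ x : Fin n → ℝ,
        A1.mulVec x = a1 ∧ A2.mulVec x ≤ a2 ∧ (∀ i, A3.mulVec x i < a3 i) ∧
        a4 ≤ A4.mulVec x ∧ (∀ i, a5 i < A5.mulVec x i))
      (∃ (y1 : Fin m1 → ℝ) (y2 : Fin m2 → ℝ) (y3 : Fin m3 → ℝ) (y4 : Fin m4 → ℝ)
          (y5 : Fin m5 → ℝ),
        0 ≤ y2 ∧ 0 ≤ y3 ∧ y4 ≤ 0 ∧ y5 ≤ 0 ∧
        Matrix.vecMul y1 A1 + Matrix.vecMul y2 A2 + Matrix.vecMul y3 A3 +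
          Matrix.vecMul y4 A4 + Matrix.vecMul y5 A5 = 0 ∧
        ((∑ j, y1 j * a1 j) + (∑ j, y2 j * a2 j) + (∑ j, y3 j * a3 j) +
            (∑ j, y4 j * a4 j) + (∑ j, y5 j * a5 j) < 0 ∨
          ((∑ j, y1 j * a1 j) + (∑ j, y2 j * a2 j) + (∑ j, y3 j * a3 j) +
              (∑ j, y4 j * a4 j) + (∑ j, y5 j * a5 j) = 0 ∧ (y3 ≠ 0 ∨ y5 ≠ 0)))) := by
  classical
  have hnb : ¬ ((∃ x : Fin n → ℝ,
        A1.mulVec x = a1 ∧ A2.mulVec x ≤ a2 ∧ (∀ i, A3.mulVec x i < a3 i) ∧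
        a4 ≤ A4.mulVec x ∧ (∀ i, a5 i < A5.mulVec x i)) ∧
      (∃ (y1 : Fin m1 → ℝ) (y2 : Fin m2 → ℝ) (y3 : Fin m3 → ℝ) (y4 : Fin m4 → ℝ)
          (y5 : Fin m5 → ℝ),
        0 ≤ y2 ∧ 0 ≤ y3 ∧ y4 ≤ 0 ∧ y5 ≤ 0 ∧
        Matrix.vecMul y1 A1 + Matrix.vecMul y2 A2 + Matrix.vecMul y3 A3 +
          Matrix.vecMul y4 A4 + Matrix.vecMul y5 A5 = 0 ∧
        ((∑ j, y1 j * a1 j) + (∑ j, y2 j * a2 j) + (∑ j, y3 j * a3 j) +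
            (∑ j, y4 j * a4 j) + (∑ j, y5 j * a5 j) < 0 ∨
          ((∑ j, y1 j * a1 j) + (∑ j, y2 j * a2 j) + (∑ j, y3 j * a3 j) +
              (∑ j, y4 j * a4 j) + (∑ j, y5 j * a5 j) = 0 ∧ (y3 ≠ 0 ∨ y5 ≠ 0))))) := by
    rintro ⟨⟨x, hx1, hx2, hx3, hx4, hx5⟩, ⟨y1, y2, y3, y4, y5, h2, h3, h4, h5, hsum, hdot⟩⟩
    exact farkas_not_both A1 A2 A3 A4 A5 a1 a2 a3 a4 a5 x hx1 hx2 hx3 hx4 hx5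
      y1 y2 y3 y4 y5 h2 h3 h4 h5 hsum hdot
  rcases motzkin n (Fin m1 ⊕ (Fin m1 ⊕ (Fin m2 ⊕ (Fin m3 ⊕ (Fin m4 ⊕ Fin m5)))))
      (Sum.elim (fun i => A1 i) (Sum.elim (fun i j => -A1 i j) (Sum.elim (fun i => A2 i)
        (Sum.elim (fun i => A3 i) (Sum.elim (fun i j => -A4 i j) (fun i j => -A5 i j))))))
      (Sum.elim a1 (Sum.elim (fun i => -a1 i) (Sum.elim a2 (Sum.elim a3
        (Sum.elim (fun i => -a4 i) (fun i => -a5 i))))))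
      (Sum.elim (fun _ => false) (Sum.elim (fun _ => false) (Sum.elim (fun _ => false)
        (Sum.elim (fun _ => true) (Sum.elim (fun _ => false) (fun _ => true))))))
    with ⟨x, hx⟩ | ⟨y, hy0, hyv, hyb⟩
  · -- feasible
    have h1 : ∃ x : Fin n → ℝ,
        A1.mulVec x = a1 ∧ A2.mulVec x ≤ a2 ∧ (∀ i, A3.mulVec x i < a3 i) ∧
        a4 ≤ A4.mulVec x ∧ (∀ i, a5 i < A5.mulVec x i) := by
      refine ⟨x, ?_, ?_, ?_, ?_, ?_⟩
      · funext i
        have ha : FRel false (dotm' (A1 i) x) (a1 i) := hx (Sum.inl i)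
        have hb : FRel false (dotm' (fun j => -A1 i j) x) (-a1 i) := hx (Sum.inr (Sum.inl i))
        have ha' := FRel_le ha
        have hb' := FRel_le hb
        rw [dotm'_neg (A1 i)] at hb'
        rw [dotm'_mulVec] at ha' hb'
        linarith
      · intro i
        have ha : FRel false (dotm' (A2 i) x) (a2 i) := hx (Sum.inr (Sum.inr (Sum.inl i)))
        have ha' := FRel_le ha
        rwa [dotm'_mulVec] at ha'
      · intro i
        have ha : FRel true (dotm' (A3 i) x) (a3 i) :=
          hx (Sum.inr (Sum.inr (Sum.inr (Sum.inl i))))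
        have ha' := FRel_lt ha
        rwa [dotm'_mulVec] at ha'
      · intro i
        have ha : FRel false (dotm' (fun j => -A4 i j) x) (-a4 i) :=
          hx (Sum.inr (Sum.inr (Sum.inr (Sum.inr (Sum.inl i)))))
        have ha' := FRel_le ha
        rw [dotm'_neg (A4 i), dotm'_mulVec] at ha'
        linarith
      · intro i
        have ha : FRel true (dotm' (fun j => -A5 i j) x) (-a5 i) :=
          hx (Sum.inr (Sum.inr (Sum.inr (Sum.inr (Sum.inr i)))))
        have ha' := FRel_lt ha
        rw [dotm'_neg (A5 i), dotm'_mulVec] at ha'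
        linarith
    exact Or.inl ⟨h1, fun h2 => hnb ⟨h1, h2⟩⟩
  · -- certificate
    have h2 : ∃ (y1 : Fin m1 → ℝ) (y2 : Fin m2 → ℝ) (y3 : Fin m3 → ℝ) (y4 : Fin m4 → ℝ)
          (y5 : Fin m5 → ℝ),
        0 ≤ y2 ∧ 0 ≤ y3 ∧ y4 ≤ 0 ∧ y5 ≤ 0 ∧
        Matrix.vecMul y1 A1 + Matrix.vecMul y2 A2 + Matrix.vecMul y3 A3 +
          Matrix.vecMul y4 A4 + Matrix.vecMul y5 A5 = 0 ∧
        ((∑ j, y1 j * a1 j) + (∑ j, y2 j * a2 j) + (∑ j, y3 j * a3 j) +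
            (∑ j, y4 j * a4 j) + (∑ j, y5 j * a5 j) < 0 ∨
          ((∑ j, y1 j * a1 j) + (∑ j, y2 j * a2 j) + (∑ j, y3 j * a3 j) +
              (∑ j, y4 j * a4 j) + (∑ j, y5 j * a5 j) = 0 ∧ (y3 ≠ 0 ∨ y5 ≠ 0))) := by
      refine ⟨fun i => y (Sum.inl i) - y (Sum.inr (Sum.inl i)),
        fun i => y (Sum.inr (Sum.inr (Sum.inl i))),
        fun i => y (Sum.inr (Sum.inr (Sum.inr (Sum.inl i)))),
        fun i => -(y (Sum.inr (Sum.inr (Sum.inr (Sum.inr (Sum.inl i)))))),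
        fun i => -(y (Sum.inr (Sum.inr (Sum.inr (Sum.inr (Sum.inr i)))))),
        fun i => hy0 _, fun i => hy0 _, fun i => neg_nonpos.mpr (hy0 _),
        fun i => neg_nonpos.mpr (hy0 _), ?_, ?_⟩
      · funext j
        have hv := hyv j
        simp only [Fintype.sum_sum_type, Sum.elim_inl, Sum.elim_inr] at hv
        simp only [Pi.add_apply, Pi.zero_apply, Matrix.vecMul, dotProduct]
        simp only [sub_mul, neg_mul, mul_neg, Finset.sum_sub_distrib,
          Finset.sum_neg_distrib] at hv ⊢
        linarith
      · have hb := hyb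
        simp only [Fintype.sum_sum_type, Sum.elim_inl, Sum.elim_inr] at hb
        have hS : (∑ j, (y (Sum.inl j) - y (Sum.inr (Sum.inl j))) * a1 j) +
            (∑ j, y (Sum.inr (Sum.inr (Sum.inl j))) * a2 j) +
            (∑ j, y (Sum.inr (Sum.inr (Sum.inr (Sum.inl j)))) * a3 j) +
            (∑ j, -(y (Sum.inr (Sum.inr (Sum.inr (Sum.inr (Sum.inl j)))))) * a4 j) +
            (∑ j, -(y (Sum.inr (Sum.inr (Sum.inr (Sum.inr (Sum.inr j)))))) * a5 j) =
            (∑ i, y (Sum.inl i) * a1 i) + ((∑ i, y (Sum.inr (Sum.inl i)) * -a1 i) +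
            ((∑ i, y (Sum.inr (Sum.inr (Sum.inl i))) * a2 i) +
            ((∑ i, y (Sum.inr (Sum.inr (Sum.inr (Sum.inl i)))) * a3 i) +
            ((∑ i, y (Sum.inr (Sum.inr (Sum.inr (Sum.inr (Sum.inl i))))) * -a4 i) +
            (∑ i, y (Sum.inr (Sum.inr (Sum.inr (Sum.inr (Sum.inr i))))) * -a5 i))))) := by
          simp only [sub_mul, neg_mul, mul_neg, Finset.sum_sub_distrib, Finset.sum_neg_distrib]
          ring
        rcases hb with hlt | ⟨heq, k, hsk, hyk⟩
        · left
          rw [hS]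
          linarith
        · right
          refine ⟨by rw [hS]; linarith, ?_⟩
          rcases k with i | i | i | i | i | i
          · simp at hsk
          · simp at hsk
          · simp at hsk
          · left
            intro hz
            have := congrFun hz i
            simp only [Pi.zero_apply] at this
            linarith [hyk, this.le]
          · simp at hsk
          · right
            intro hz
            have := congrFun hz i
            simp only [Pi.zero_apply] at this
            have : -(y (Sum.inr (Sum.inr (Sum.inr (Sum.inr (Sum.inr i)))))) = 0 := this
            linarith
    exact Or.inr ⟨h2, fun h1 => hnb ⟨h1, h2⟩⟩
end
end

section
/- Suppose P(a,I,J,K) is nonempty and b ∈ F_a, the smallest face of the derived arrangement δA_o containing a. Then P(b,I,J,K) is nonempty. -/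
open RealInnerProductSpace

noncomputable section

/-- `b` belongs to `F_a`, the smallest face of the derived arrangement containing `a`. -/
def MemMinFace {n m : ℕ} (u : Fin m → Euc n) (a b : Fin m → ℝ) : Prop :=
  ∀ c : Fin m → ℝ, IsCircuitVector u c →
    (dotm c a = 0 → dotm c b = 0) ∧ (0 < dotm c a → 0 ≤ dotm c b) ∧
    (dotm c a < 0 → dotm c b ≤ 0)

/-!
By Farkas' lemma, `P(b, I, J, K)` is nonempty iff `dotm c b ≥ 0` for every linear dependence `c`
of the `u i` with `c ≥ 0` on `J` and `c ≤ 0` on `K`. Such a `c` is a conformal sum of circuit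
vectors: subtract a conformal circuit vector with the largest coefficient that keeps the rest
conformal, and recurse on the strictly smaller support. Each of these circuit vectors `w` obeys the
same sign conditions, so `dotm w a ≥ 0` because `P(a, I, J, K)` is nonempty, and `b ∈ F_a` turns
this into `dotm w b ≥ 0`.

Farkas' lemma is hyperplane separation from a finitely generated cone, which is closed by the conic
Carathéodory theorem: it is a finite union of cones over linearly independent families.
-/

open Function Set

section LinearCombination

variable {ι R M : Type*} [Fintype ι] [Ring R] [AddCommGroup M] [Module R M]

theorem linearIndepOn_iff_support_subset {v : ι → M} {s : Set ι} :
    LinearIndepOn R v s ↔ ∀ g : ι → R, support g ⊆ s → ∑ i, g i • v i = 0 → g = 0 := by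
  classical
  rw [linearIndepOn_iff'']
  constructor
  · intro h g hgs hg
    ext i
    by_contra hi
    refine hi (h (Finset.univ.filter (g · ≠ 0)) g (fun i hi => hgs (by simpa using hi))
      (by simp) ?_ i (by simpa))
    rwa [Finset.sum_filter_of_ne fun i _ hi => left_ne_zero_of_smul hi]
  · intro h t g hts hgt hg i _
    have hsupp : support g ⊆ t := fun i hi => by_contra fun hit => hi (hgt i hit)
    refine congrFun (h g (hsupp.trans hts) ?_) i
    rwa [← Finset.sum_subset (Finset.subset_univ t) fun i _ hit => by simp [hgt i hit]]

theorem sum_sub_smul_smul (z g : ι → R) (t : R) (v : ι → M) :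
    ∑ i, (z - t • g) i • v i = ∑ i, z i • v i - t • ∑ i, g i • v i := by
  simp [sub_smul, mul_smul, Finset.sum_sub_distrib, Finset.smul_sum]

end LinearCombination

section Conformal

variable {ι 𝕜 : Type*} [Field 𝕜] [LinearOrder 𝕜]

def Conforms (w c : ι → 𝕜) : Prop :=
  ∀ i, 0 ≤ w i * c i ∧ (c i = 0 → w i = 0)

namespace Conforms

variable {w z c : ι → 𝕜}

theorem support_subset (h : Conforms w c) : support w ⊆ support c :=
  fun i hw hc => hw ((h i).2 hc)

variable [IsStrictOrderedRing 𝕜]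

theorem refl (c : ι → 𝕜) : Conforms c c := fun _ => ⟨mul_self_nonneg _, id⟩

theorem trans (hwz : Conforms w z) (hzc : Conforms z c) : Conforms w c := by
  intro i
  refine ⟨?_, fun hc => (hwz i).2 ((hzc i).2 hc)⟩
  rcases eq_or_ne (z i) 0 with hz | hz
  · simp [(hwz i).2 hz]
  · have h : 0 ≤ w i * c i * (z i * z i) := by
      linarith [mul_nonneg (hwz i).1 (hzc i).1]
    exact nonneg_of_mul_nonneg_left h (mul_self_pos.2 hz)

theorem nonneg_of_nonneg (h : Conforms w c) {i : ι} (hc : 0 ≤ c i) : 0 ≤ w i := by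
  rcases hc.eq_or_lt with hc | hc
  · exact ((h i).2 hc.symm).ge
  · exact nonneg_of_mul_nonneg_left (h i).1 hc

theorem nonpos_of_nonpos (h : Conforms w c) {i : ι} (hc : c i ≤ 0) : w i ≤ 0 := by
  rcases hc.eq_or_lt with hc | hc
  · exact ((h i).2 hc).le
  · exact nonpos_of_mul_nonneg_left (h i).1 hc

end Conforms

variable [IsStrictOrderedRing 𝕜] [Fintype ι]

theorem exists_pos_conforms_sub_smul {c g : ι → 𝕜} (hg : support g ⊆ support c)
    (hpos : ∃ i, 0 < g i * c i) :
    ∃ t : 𝕜, 0 < t ∧ Conforms (c - t • g) c ∧ support (c - t • g) ⊂ support c := by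
  classical
  obtain ⟨i₀, hi₀, hmin⟩ := Finset.exists_min_image (Finset.univ.filter fun i => 0 < g i * c i)
    (fun i => c i / g i) (by simpa [Finset.Nonempty] using hpos)
  simp only [Finset.mem_filter, Finset.mem_univ, true_and] at hi₀ hmin
  have hg₀ : g i₀ ≠ 0 := by rintro h; simp [h] at hi₀
  -- minimum ratio test: the largest step that keeps every coordinate on the side of `c`
  set t := c i₀ / g i₀
  have ht : 0 < t := div_pos_iff.2 ((mul_pos_iff.1 hi₀).imp And.symm And.symm)
  have hconf : Conforms (c - t • g) c := by
    intro i
    simp only [Pi.sub_apply, Pi.smul_apply, smul_eq_mul]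
    refine ⟨?_, fun hc => by simp [hc, not_not.1 fun h => hg h hc]⟩
    by_cases hi : 0 < g i * c i
    · have hgi : g i ≠ 0 := by rintro h; simp [h] at hi
      have hti : t * (g i * c i) ≤ c i * c i :=
        calc t * (g i * c i) ≤ c i / g i * (g i * c i) :=
              mul_le_mul_of_nonneg_right (hmin i hi) hi.le
          _ = c i * c i := by field_simp
      linarith
    · nlinarith [mul_self_nonneg (c i)]
  refine ⟨t, ht, hconf, hconf.support_subset.ssubset_of_ne fun h => ?_⟩
  have : i₀ ∈ support (c - t • g) := by
    rw [h]; rintro hc; simp [hc] at hi₀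
  simp [t, div_mul_cancel₀ _ hg₀] at this

theorem exists_conforms_sub_smul {c g : ι → 𝕜} (hg : support g ⊆ support c) (hg₀ : g ≠ 0) :
    ∃ t : 𝕜, Conforms (c - t • g) c ∧ support (c - t • g) ⊂ support c := by
  obtain ⟨i, hi⟩ := Function.ne_iff.1 hg₀
  rcases (mul_ne_zero hi (hg hi)).lt_or_gt with hneg | hpos
  · obtain ⟨t, -, h⟩ := exists_pos_conforms_sub_smul (c := c) (g := -g) (by rwa [support_neg])
      ⟨i, by rwa [Pi.neg_apply, neg_mul, neg_pos]⟩
    exact ⟨-t, by rwa [neg_smul, ← smul_neg]⟩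
  · obtain ⟨t, -, h⟩ := exists_pos_conforms_sub_smul hg ⟨i, hpos⟩
    exact ⟨t, h⟩

end Conformal

section ConicalHull

variable {ι 𝕜 E : Type*} [Fintype ι] [Field 𝕜] [LinearOrder 𝕜] [IsStrictOrderedRing 𝕜]
  [AddCommGroup E] [Module 𝕜 E]

theorem PointedCone.mem_hull_range_iff {v : ι → E} {x : E} :
    x ∈ hull 𝕜 (range v) ↔ ∃ c : ι → 𝕜, 0 ≤ c ∧ ∑ i, c i • v i = x := by
  rw [hull, Submodule.mem_span_range_iff_exists_fun]
  constructor
  · rintro ⟨c, rfl⟩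
    exact ⟨fun i => c i, fun i => (c i).2, rfl⟩
  · rintro ⟨c, hc, rfl⟩
    exact ⟨fun i => ⟨c i, hc i⟩, rfl⟩

theorem exists_nonneg_linearIndepOn_sum_smul_eq (v : ι → E) {c : ι → 𝕜} (hc : 0 ≤ c) :
    ∃ c' : ι → 𝕜, 0 ≤ c' ∧ LinearIndepOn 𝕜 v (support c') ∧
      ∑ i, c' i • v i = ∑ i, c i • v i := by
  by_cases hind : LinearIndepOn 𝕜 v (support c)
  · exact ⟨c, hc, hind, rfl⟩
  obtain ⟨g, hgc, hg, hg₀⟩ : ∃ g : ι → 𝕜, support g ⊆ support c ∧ ∑ i, g i • v i = 0 ∧ g ≠ 0 := by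
    simpa [linearIndepOn_iff_support_subset] using hind
  obtain ⟨t, hconf, hsub⟩ := exists_conforms_sub_smul hgc hg₀
  have := ncard_lt_ncard hsub
  obtain ⟨c', hc', hind', hsum⟩ :=
    exists_nonneg_linearIndepOn_sum_smul_eq v fun i => hconf.nonneg_of_nonneg (hc i)
  exact ⟨c', hc', hind', by rw [hsum, sum_sub_smul_smul, hg, smul_zero, sub_zero]⟩
termination_by (support c).ncard

end ConicalHull

section Farkas

open PointedCone

variable {ι E : Type*} [Fintype ι] [NormedAddCommGroup E]

theorem PointedCone.isClosed_hull_range_of_linearIndependent [NormedSpace ℝ E]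
    [FiniteDimensional ℝ E] {v : ι → E} (hv : LinearIndependent ℝ v) :
    IsClosed (hull ℝ (range v) : Set E) := by
  have himage : (hull ℝ (range v) : Set E) = Fintype.linearCombination ℝ v '' Ici 0 := by
    ext x
    simp [mem_hull_range_iff, Fintype.linearCombination_apply]
  have hker : LinearMap.ker (Fintype.linearCombination ℝ v) = ⊥ :=
    LinearMap.ker_eq_bot'.2 fun c hc => funext (Fintype.linearIndependent_iff.1 hv c hc)
  rw [himage]
  exact (LinearMap.isClosedEmbedding_of_injective hker).isClosedMap _ isClosed_Ici

theorem PointedCone.isClosed_hull_range [NormedSpace ℝ E] [FiniteDimensional ℝ E] (v : ι → E) :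
    IsClosed (hull ℝ (range v) : Set E) := by
  classical
  have hunion : (hull ℝ (range v) : Set E) =
      ⋃ s : {s : Set ι // LinearIndepOn ℝ v s}, hull ℝ (range fun i : s.1 => v i) := by
    refine Subset.antisymm (fun x hx => ?_) (iUnion_subset fun s => Submodule.span_mono ?_)
    · obtain ⟨c, hc, rfl⟩ := mem_hull_range_iff.1 hx
      obtain ⟨c', hc', hind, hsum⟩ := exists_nonneg_linearIndepOn_sum_smul_eq v hc
      refine mem_iUnion.2 ⟨⟨support c', hind⟩, hsum ▸ Submodule.sum_mem _ fun i _ => ?_⟩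
      by_cases hi : c' i = 0
      · simp [hi]
      · exact (hull ℝ _).smul_mem (hc' i) (subset_hull ⟨⟨i, hi⟩, rfl⟩)
    · rintro _ ⟨i, rfl⟩
      exact ⟨i, rfl⟩
  rw [hunion]
  exact isClosed_iUnion_of_finite fun s => isClosed_hull_range_of_linearIndependent s.2

variable [InnerProductSpace ℝ E] [FiniteDimensional ℝ E]

theorem PointedCone.mem_hull_range_of_forall_inner_nonneg {v : ι → E} {b : E}
    (h : ∀ y, (∀ i, 0 ≤ ⟪v i, y⟫) → 0 ≤ ⟪b, y⟫) : b ∈ hull ℝ (range v) := by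
  by_contra hb
  obtain ⟨y, hy, hby⟩ :=
    ProperCone.hyperplane_separation' ⟨hull ℝ (range v), isClosed_hull_range v⟩ hb
  exact hby.not_ge (h y fun i => hy _ (subset_hull ⟨i, rfl⟩))

theorem exists_nonneg_sum_add_sum_of_forall_inner {κ : Type*} [Fintype κ] {v : ι → E}
    {w : κ → E} {b : E}
    (h : ∀ y, (∀ i, 0 ≤ ⟪v i, y⟫) → (∀ k, ⟪w k, y⟫ = 0) → 0 ≤ ⟪b, y⟫) :
    ∃ c : ι → ℝ, 0 ≤ c ∧ ∃ d : κ → ℝ, ∑ i, c i • v i + ∑ k, d k • w k = b := by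
  have hb : b ∈ hull ℝ (range (Sum.elim v (Sum.elim w (-w)))) :=
    mem_hull_range_of_forall_inner_nonneg fun y hy =>
      h y (fun i => hy (.inl i)) fun k =>
        le_antisymm (by simpa [inner_neg_left] using hy (.inr (.inr k))) (hy (.inr (.inl k)))
  obtain ⟨c, hc, rfl⟩ := mem_hull_range_iff.1 hb
  refine ⟨fun i => c (.inl i), fun i => hc _, fun k => c (.inr (.inl k)) - c (.inr (.inr k)), ?_⟩
  simp only [Fintype.sum_sum_type, Sum.elim_inl, Sum.elim_inr, Pi.neg_apply, smul_neg, sub_smul,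
    Finset.sum_sub_distrib, Finset.sum_neg_distrib]
  abel

end Farkas

section Circuits

variable {n m : ℕ} {u : Fin m → Euc n}

theorem IsCircuitVector.ne_zero {w : Fin m → ℝ} (hw : IsCircuitVector u w) : w ≠ 0 := by
  rintro rfl
  have : IsEmpty {i : Fin m | (0 : Fin m → ℝ) i ≠ 0} := ⟨fun i => i.2 rfl⟩
  exact hw.2.1 linearIndependent_empty_type

theorem exists_isCircuitVector_conforms {z : Fin m → ℝ} (hz : ∑ i, z i • u i = 0)
    (hz₀ : z ≠ 0) : ∃ w, IsCircuitVector u w ∧ Conforms w z := by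
  by_cases hC : IsCircuit u (support z)
  · exact ⟨z, ⟨hz, hC⟩, .refl z⟩
  obtain ⟨D, hD, hDdep⟩ : ∃ D ⊂ support z, ¬ LinearIndepOn ℝ u D := by
    have hdep : ¬ LinearIndepOn ℝ u (support z) := fun h =>
      hz₀ (linearIndepOn_iff_support_subset.1 h z subset_rfl hz)
    by_contra! h
    exact hC ⟨hdep, h⟩
  obtain ⟨g, hgD, hg, hg₀⟩ : ∃ g : Fin m → ℝ, support g ⊆ D ∧ ∑ i, g i • u i = 0 ∧ g ≠ 0 := by
    simpa [linearIndepOn_iff_support_subset] using hDdep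
  obtain ⟨t, hconf, hsub⟩ := exists_conforms_sub_smul (hgD.trans hD.subset) hg₀
  have hz'₀ : z - t • g ≠ 0 := by
    obtain ⟨k, hkz, hkD⟩ := exists_of_ssubset hD
    have hgk : g k = 0 := not_not.1 fun hk => hkD (hgD hk)
    exact Function.ne_iff.2 ⟨k, by simpa [hgk] using hkz⟩
  have := ncard_lt_ncard hsub
  obtain ⟨w, hw, hwz⟩ := exists_isCircuitVector_conforms (z := z - t • g)
    (by rw [sum_sub_smul_smul, hz, hg, smul_zero, sub_zero]) hz'₀
  exact ⟨w, hw, hwz.trans hconf⟩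
termination_by (support z).ncard

theorem dotm_nonneg_of_forall_isCircuitVector {z b : Fin m → ℝ} (hz : ∑ i, z i • u i = 0)
    (h : ∀ w, IsCircuitVector u w → Conforms w z → 0 ≤ dotm w b) : 0 ≤ dotm z b := by
  by_cases hz₀ : z = 0
  · simp [hz₀, dotm]
  obtain ⟨w, hw, hwz⟩ := exists_isCircuitVector_conforms hz hz₀
  have hpos : ∃ i, 0 < w i * z i := by
    obtain ⟨i, hi⟩ := Function.ne_iff.1 hw.ne_zero
    exact ⟨i, (hwz i).1.lt_of_ne' (mul_ne_zero hi (hwz.support_subset hi))⟩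
  obtain ⟨t, ht, hconf, hsub⟩ := exists_pos_conforms_sub_smul hwz.support_subset hpos
  have := ncard_lt_ncard hsub
  have ih := dotm_nonneg_of_forall_isCircuitVector (z := z - t • w)
    (by rw [sum_sub_smul_smul, hz, hw.1, smul_zero, sub_zero])
    fun w' hw' hw'z => h w' hw' (hw'z.trans hconf)
  have hdot : dotm (z - t • w) b = dotm z b - t * dotm w b := by
    simp [dotm, sub_mul, Finset.sum_sub_distrib, Finset.mul_sum, mul_assoc]
  nlinarith [h w hw hwz]
termination_by (support z).ncard

end Circuits

section Polyhedron

variable {n m : ℕ} {u : Fin m → Euc n} {J K : Set (Fin m)}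

def IsSignedDependence (u : Fin m → Euc n) (J K : Set (Fin m)) (c : Fin m → ℝ) : Prop :=
  ∑ i, c i • u i = 0 ∧ (∀ j ∈ J, 0 ≤ c j) ∧ ∀ k ∈ K, c k ≤ 0

theorem IsSignedDependence.of_conforms {c w : Fin m → ℝ} (hc : IsSignedDependence u J K c)
    (hw : ∑ i, w i • u i = 0) (hwc : Conforms w c) : IsSignedDependence u J K w :=
  ⟨hw, fun j hj => hwc.nonneg_of_nonneg (hc.2.1 j hj),
    fun k hk => hwc.nonpos_of_nonpos (hc.2.2 k hk)⟩

theorem IsSignedDependence.dotm_nonneg {I : Set (Fin m)} {a c : Fin m → ℝ} {x : Euc n}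
    (hc : IsSignedDependence u J K c) (hcover : I ∪ J ∪ K = univ) (hx : x ∈ poly u a I J K) :
    0 ≤ dotm c a := by
  have hinner : ∑ i, c i * ⟪u i, x⟫ = 0 := by
    simp [← real_inner_smul_left, ← sum_inner, hc.1]
  refine hinner ▸ Finset.sum_le_sum fun i _ => ?_
  rcases (hcover ▸ mem_univ i : i ∈ I ∪ J ∪ K) with (hi | hi) | hi
  · rw [hx.1 i hi]
  · exact mul_le_mul_of_nonneg_left (hx.2.1 i hi) (hc.2.1 i hi)
  · exact mul_le_mul_of_nonpos_left (hx.2.2 i hi) (hc.2.2 i hi)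

theorem poly_nonempty_of_forall_dotm_nonneg {I : Set (Fin m)} {b : Fin m → ℝ}
    (hIJ : Disjoint I J) (hIK : Disjoint I K) (hJK : Disjoint J K)
    (h : ∀ c, IsSignedDependence u J K c → 0 ≤ dotm c b) : (poly u b I J K).Nonempty := by
  classical
  -- `P(b)` is nonempty iff `b` is `(⟪u i, x⟫)ᵢ` plus a point of the cone spanned by the `s i • eᵢ`.
  let s : Fin m → ℝ := fun i => if i ∈ J then 1 else if i ∈ K then -1 else 0
  obtain ⟨c, hc, d, hb⟩ := exists_nonneg_sum_add_sum_of_forall_inner (E := Euc m)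
    (v := fun i => s i • EuclideanSpace.single i 1) (w := fun r => WithLp.toLp 2 fun i => u i r)
    (b := WithLp.toLp 2 b) fun y hyv hyw => by
      have hy : IsSignedDependence u J K fun i => y i := by
        refine ⟨?_, fun j hj => ?_, fun k hk => ?_⟩
        · ext r
          simpa [PiLp.inner_apply, mul_comm] using hyw r
        · simpa [s, hj, EuclideanSpace.inner_single_left] using hyv j
        · simpa [s, hk, hJK.notMem_of_mem_right hk, EuclideanSpace.inner_single_left]
            using hyv k
      simpa [dotm, PiLp.inner_apply, mul_comm] using h _ hy
  have hcoord : ∀ i, b i = c i * s i + ⟪u i, WithLp.toLp 2 d⟫ := fun i => by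
    simpa [PiLp.inner_apply, Pi.single_apply, mul_comm]
      using (congrArg (fun x : Euc m => x i) hb).symm
  refine ⟨WithLp.toLp 2 d, fun i hi => ?_, fun j hj => ?_, fun k hk => ?_⟩
  · simp [hcoord i, s, hIJ.notMem_of_mem_left hi, hIK.notMem_of_mem_left hi]
  · simpa [hcoord j, s, hj] using hc j
  · simpa [hcoord k, s, hk, hJK.notMem_of_mem_right hk] using hc k

theorem poly_nonempty_iff {I : Set (Fin m)} {b : Fin m → ℝ} (hIJK : IsTripartition I J K) :
    (poly u b I J K).Nonempty ↔ ∀ c, IsSignedDependence u J K c → 0 ≤ dotm c b :=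
  ⟨fun ⟨_, hx⟩ _ hc => hc.dotm_nonneg hIJK.1 hx,
    poly_nonempty_of_forall_dotm_nonneg hIJK.2.1 hIJK.2.2.1 hIJK.2.2.2⟩

end Polyhedron

theorem poly_nonempty_of_memMinFace_general {n m : ℕ}
    (u : Fin m → Euc n)
    (a b : Fin m → ℝ) (hb : MemMinFace u a b)
    (I J K : Set (Fin m)) (hIJK : IsTripartition I J K)
    (hne : (poly u a I J K).Nonempty) :
    (poly u b I J K).Nonempty := by
  rw [poly_nonempty_iff hIJK] at hne ⊢
  intro c hc
  refine dotm_nonneg_of_forall_isCircuitVector hc.1 fun w hw hwc => ?_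
  rcases (hne w (hc.of_conforms hw.1 hwc)).eq_or_lt with h | h
  · exact ((hb w hw).1 h.symm).ge
  · exact (hb w hw).2.1 h

theorem poly_nonempty_of_memMinFace {n m : ℕ} (hn : 1 ≤ n) (hm : 1 ≤ m)
    (u : Fin m → Euc n) (hu : ∀ i, u i ≠ 0)
    (a b : Fin m → ℝ) (hb : MemMinFace u a b)
    (I J K : Set (Fin m)) (hIJK : IsTripartition I J K)
    (hne : (poly u a I J K).Nonempty) :
    (poly u b I J K).Nonempty :=
  poly_nonempty_of_memMinFace_general u a b hb I J K hIJK hne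
end
end
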